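/- Let α : A → B be a ring homomorphism such that B, regarded as a left A-module via α, is flat, and let M be an A-regular right A-module. Then the right B-module M ⊗_A B is B-regular. -/

import Mathlib

/-! Extension of scalars `N ↦ N ⊗_A B`, from right `A`-modules to right `B`-modules, is exact
because `B` is flat, preserves colimits because it is left adjoint to restriction of scalars
along `α`, and sends finitely generated projective modules to finitely generated projective
modules. So for every cocomplete exact class `P` of right `B`-modules containing the finitely
generated projectives, the right `A`-modules `N` with `N ⊗_A B ∈ P` form a class of the same kind,
which therefore contains the `A`-regular module `M`. -/

open CategoryTheory

/-- A class of left `R`-modules (predicate on bundled modules) is *exact* if, in every short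
exact sequence of `R`-modules in which two of the three modules belong to the class,
the third belongs to it as well. -/
def IsExactClass {R : Type} [Ring R] (P : ModuleCat.{0} R → Prop) : Prop :=
  ∀ (X Y Z : ModuleCat.{0} R) (f : X ⟶ Y) (g : Y ⟶ Z),
    Function.Injective f → Function.Surjective g → Function.Exact f g →
      ((P X ∧ P Y → P Z) ∧ (P X ∧ P Z → P Y) ∧ (P Y ∧ P Z → P X))

/-- A class of left `R`-modules is *cocomplete* if it is stable under filtered colimits. -/
def IsCocompleteClass {R : Type} [Ring R] (P : ModuleCat.{0} R → Prop) : Prop :=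
  ∀ (J : Type) [SmallCategory J] [IsFiltered J] (F : J ⥤ ModuleCat.{0} R)
    (c : Limits.Cocone F), Limits.IsColimit c → (∀ j, P (F.obj j)) → P c.pt

/-- Finitely generated projective modules. -/
def FGProj {R : Type} [Ring R] (M : ModuleCat.{0} R) : Prop :=
  Module.Finite R M ∧ Module.Projective R M

/-- The category of left `R`-modules is regular: the only cocomplete exact class of modules
containing the finitely generated projective modules is the class of all modules. -/
def RegularModuleCategory (R : Type) [Ring R] : Prop :=
  ∀ P : ModuleCat.{0} R → Prop, IsExactClass P → IsCocompleteClass P →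
    (∀ N, FGProj N → P N) → ∀ M, P M

/-- A (left) `R`-module is *regular* if it belongs to every cocomplete exact class of modules
containing the finitely generated projective modules. -/
def IsRegularModule (R : Type) [Ring R] (M : Type) [AddCommGroup M] [Module R M] : Prop :=
  ∀ P : ModuleCat.{0} R → Prop, IsExactClass P → IsCocompleteClass P →
    (∀ N, FGProj N → P N) → P (ModuleCat.of R M)

/-- A ring `A` is *regular on the right* if the category of right `A`-modules
(i.e. left `Aᵐᵒᵖ`-modules) is regular. -/
def RightRegular (A : Type) [Ring A] : Prop := RegularModuleCategory Aᵐᵒᵖ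

/-- A ring `A` is *regular on the left*. -/
def LeftRegular (A : Type) [Ring A] : Prop := RegularModuleCategory A

/-! ### The balanced tensor product `M ⊗_A N` over a (possibly noncommutative) ring `A`,
where `M` is a right `A`-module (a left `Aᵐᵒᵖ`-module) and `N` is a left `A`-module. -/

/-- The subgroup of relations defining the balanced tensor product `M ⊗_A N` as a quotient of
`M ⊗_ℤ N`: it is generated by the elements `(m · a) ⊗ n - m ⊗ (a · n)`. -/
noncomputable def balancedRel (A : Type) [Ring A] (M N : Type) [AddCommGroup M] [Module Aᵐᵒᵖ M]
    [AddCommGroup N] [Module A N] : AddSubgroup (TensorProduct ℤ M N) :=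
  AddSubgroup.closure
    {x | ∃ (a : A) (m : M) (n : N),
      x = (MulOpposite.op a • m) ⊗ₜ[ℤ] n - m ⊗ₜ[ℤ] (a • n)}

/-- The balanced tensor product `M ⊗_A N` of a right `A`-module `M` and a left `A`-module `N`,
defined as the quotient of `M ⊗_ℤ N` by the subgroup generated by the elements
`(m · a) ⊗ n - m ⊗ (a · n)`. -/
abbrev BalancedTensor (A : Type) [Ring A] (M N : Type) [AddCommGroup M] [Module Aᵐᵒᵖ M]
    [AddCommGroup N] [Module A N] : Type :=
  TensorProduct ℤ M N ⧸ balancedRel A M N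

/-- Functoriality of `M ⊗_A N` in the right module (first) variable. -/
noncomputable def balancedMapLeft {A : Type} [Ring A] {M M' N : Type} [AddCommGroup M] [Module Aᵐᵒᵖ M]
    [AddCommGroup M'] [Module Aᵐᵒᵖ M'] [AddCommGroup N] [Module A N]
    (f : M →ₗ[Aᵐᵒᵖ] M') : BalancedTensor A M N →+ BalancedTensor A M' N :=
  QuotientAddGroup.map _ _
    (TensorProduct.map f.toAddMonoidHom.toIntLinearMap LinearMap.id).toAddMonoidHom
    (by
      rw [balancedRel, AddSubgroup.closure_le]
      rintro x ⟨a, m, n, rfl⟩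
      simp only [SetLike.mem_coe, AddSubgroup.mem_comap, map_sub,
        LinearMap.toAddMonoidHom_coe, TensorProduct.map_tmul,
        AddMonoidHom.coe_toIntLinearMap, LinearMap.toAddMonoidHom_coe, LinearMap.id_coe, id_eq]
      exact AddSubgroup.subset_closure ⟨a, f m, n, by rw [map_smul]⟩)

/-- Functoriality of `M ⊗_A N` in the left module (second) variable. -/
noncomputable def balancedMapRight {A : Type} [Ring A] {M N N' : Type} [AddCommGroup M] [Module Aᵐᵒᵖ M]
    [AddCommGroup N] [Module A N] [AddCommGroup N'] [Module A N']
    (g : N →ₗ[A] N') : BalancedTensor A M N →+ BalancedTensor A M N' :=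
  QuotientAddGroup.map _ _
    (TensorProduct.map LinearMap.id g.toAddMonoidHom.toIntLinearMap).toAddMonoidHom
    (by
      rw [balancedRel, AddSubgroup.closure_le]
      rintro x ⟨a, m, n, rfl⟩
      simp only [SetLike.mem_coe, AddSubgroup.mem_comap, map_sub,
        LinearMap.toAddMonoidHom_coe, TensorProduct.map_tmul,
        AddMonoidHom.coe_toIntLinearMap, LinearMap.id_coe, id_eq]
      exact AddSubgroup.subset_closure ⟨a, m, g n, by rw [map_smul]⟩)

/-- A left `A`-module `N` is *flat* if the functor `M ↦ M ⊗_A N`, from right `A`-modules to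
abelian groups, sends short exact sequences to short exact sequences. -/
def LeftModuleFlat (A : Type) [Ring A] (N : Type) [AddCommGroup N] [Module A N] : Prop :=
  ∀ (M₁ M₂ M₃ : Type) [AddCommGroup M₁] [Module Aᵐᵒᵖ M₁] [AddCommGroup M₂] [Module Aᵐᵒᵖ M₂]
    [AddCommGroup M₃] [Module Aᵐᵒᵖ M₃] (f : M₁ →ₗ[Aᵐᵒᵖ] M₂) (g : M₂ →ₗ[Aᵐᵒᵖ] M₃),
    Function.Injective f → Function.Surjective g → Function.Exact f g →
      Function.Injective (balancedMapLeft (N := N) f) ∧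
        Function.Surjective (balancedMapLeft (N := N) g) ∧
          Function.Exact (balancedMapLeft (N := N) f) (balancedMapLeft (N := N) g)

/-- A right `A`-module `M` is *flat* if the functor `N ↦ M ⊗_A N`, from left `A`-modules to
abelian groups, sends short exact sequences to short exact sequences. -/
def RightModuleFlat (A : Type) [Ring A] (M : Type) [AddCommGroup M] [Module Aᵐᵒᵖ M] : Prop :=
  ∀ (N₁ N₂ N₃ : Type) [AddCommGroup N₁] [Module A N₁] [AddCommGroup N₂] [Module A N₂]
    [AddCommGroup N₃] [Module A N₃] (f : N₁ →ₗ[A] N₂) (g : N₂ →ₗ[A] N₃),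
    Function.Injective f → Function.Surjective g → Function.Exact f g →
      Function.Injective (balancedMapRight (M := M) f) ∧
        Function.Surjective (balancedMapRight (M := M) g) ∧
          Function.Exact (balancedMapRight (M := M) f) (balancedMapRight (M := M) g)

section Statement4

variable {A B : Type} [Ring A] [Ring B] [Module A B]

theorem balancedMapRight_mk {M N N' : Type} [AddCommGroup M] [Module Aᵐᵒᵖ M]
    [AddCommGroup N] [Module A N] [AddCommGroup N'] [Module A N'] (g : N →ₗ[A] N')
    (y : TensorProduct ℤ M N) :
    balancedMapRight (M := M) g (QuotientAddGroup.mk y)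
      = QuotientAddGroup.mk
          (TensorProduct.map LinearMap.id g.toAddMonoidHom.toIntLinearMap y) :=
  QuotientAddGroup.map_mk _ _ _ _ _

/-- Right multiplication by an element of `B` as an endomorphism of the left `A`-module `B`
(where the `A`-action commutes with right multiplication). -/
def rmulLin (hB : ∀ (a : A) (x y : B), a • (x * y) = (a • x) * y) (b : B) : B →ₗ[A] B where
  toFun x := x * b
  map_add' x y := add_mul x y b
  map_smul' a x := (hB a x b).symm

/-- The right `B`-module structure on the balanced tensor product `M ⊗_A B` coming from right
multiplication on the second factor. -/
noncomputable def balancedTensorModule (M : Type) [AddCommGroup M] [Module Aᵐᵒᵖ M]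
    (hB : ∀ (a : A) (x y : B), a • (x * y) = (a • x) * y) :
    Module Bᵐᵒᵖ (BalancedTensor A M B) :=
  letI : SMul Bᵐᵒᵖ (BalancedTensor A M B) :=
    ⟨fun b x => balancedMapRight (M := M) (rmulLin hB b.unop) x⟩
  Module.ofMinimalAxioms
    (fun r x y => map_add (balancedMapRight (M := M) (rmulLin hB r.unop)) x y)
    (fun r s x => by
      induction x using QuotientAddGroup.induction_on with
      | _ y =>
        show balancedMapRight (M := M) (rmulLin hB (r + s).unop) (QuotientAddGroup.mk y)
          = balancedMapRight (M := M) (rmulLin hB r.unop) (QuotientAddGroup.mk y)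
            + balancedMapRight (M := M) (rmulLin hB s.unop) (QuotientAddGroup.mk y)
        rw [balancedMapRight_mk, balancedMapRight_mk, balancedMapRight_mk,
          ← QuotientAddGroup.mk_add]
        congr 1
        have h1 : (rmulLin hB (r + s).unop).toAddMonoidHom.toIntLinearMap
            = (rmulLin hB r.unop).toAddMonoidHom.toIntLinearMap
              + (rmulLin hB s.unop).toAddMonoidHom.toIntLinearMap := by
          apply LinearMap.ext; intro x
          show x * (r + s).unop = x * r.unop + x * s.unop
          rw [MulOpposite.unop_add, mul_add]
        rw [h1, TensorProduct.map_add_right, LinearMap.add_apply])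
    (fun r s x => by
      induction x using QuotientAddGroup.induction_on with
      | _ y =>
        show balancedMapRight (M := M) (rmulLin hB (r * s).unop) (QuotientAddGroup.mk y)
          = balancedMapRight (M := M) (rmulLin hB r.unop)
              (balancedMapRight (M := M) (rmulLin hB s.unop) (QuotientAddGroup.mk y))
        rw [balancedMapRight_mk, balancedMapRight_mk, balancedMapRight_mk]
        congr 1
        have h1 : (rmulLin hB (r * s).unop).toAddMonoidHom.toIntLinearMap
            = ((rmulLin hB r.unop).toAddMonoidHom.toIntLinearMap).comp
                ((rmulLin hB s.unop).toAddMonoidHom.toIntLinearMap) := by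
          apply LinearMap.ext; intro x
          show x * (r * s).unop = (x * s.unop) * r.unop
          rw [MulOpposite.unop_mul, mul_assoc]
        rw [h1, ← LinearMap.comp_apply, ← TensorProduct.map_comp, LinearMap.id_comp])
    (fun x => by
      induction x using QuotientAddGroup.induction_on with
      | _ y =>
        show balancedMapRight (M := M) (rmulLin hB (1 : Bᵐᵒᵖ).unop) (QuotientAddGroup.mk y) = _
        rw [balancedMapRight_mk]
        have h1 : (rmulLin hB (1 : Bᵐᵒᵖ).unop).toAddMonoidHom.toIntLinearMap
            = LinearMap.id := by
          apply LinearMap.ext; intro x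
          show x * (1 : B) = x
          rw [mul_one]
        rw [h1, TensorProduct.map_id]
        rfl)

end Statement4

open MulOpposite

namespace BalancedTensor

variable (A : Type) [Ring A] {M M' M'' N N' T : Type} [AddCommGroup M] [Module Aᵐᵒᵖ M]
  [AddCommGroup M'] [Module Aᵐᵒᵖ M'] [AddCommGroup M''] [Module Aᵐᵒᵖ M'']
  [AddCommGroup N] [Module A N] [AddCommGroup N'] [Module A N'] [AddCommGroup T]

noncomputable def tmul (m : M) (n : N) : BalancedTensor A M N :=
  QuotientAddGroup.mk (m ⊗ₜ[ℤ] n)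

variable {A}

@[elab_as_elim]
theorem induction_on {motive : BalancedTensor A M N → Prop} (x : BalancedTensor A M N)
    (zero : motive 0) (tmul : ∀ m n, motive (tmul A m n))
    (add : ∀ x y, motive x → motive y → motive (x + y)) : motive x := by
  induction x using QuotientAddGroup.induction_on with
  | H y =>
    induction y using TensorProduct.induction_on with
    | zero => exact zero
    | tmul m n => exact tmul m n
    | add y y' hy hy' => exact add _ _ hy hy'

theorem add_tmul (m m' : M) (n : N) : tmul A (m + m') n = tmul A m n + tmul A m' n := by
  rw [tmul, TensorProduct.add_tmul]
  rfl

theorem op_smul_tmul (a : A) (m : M) (n : N) : tmul A (op a • m) n = tmul A m (a • n) := by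
  rw [tmul, tmul, QuotientAddGroup.eq, neg_add_eq_sub, ← neg_sub]
  exact neg_mem (AddSubgroup.subset_closure ⟨a, m, n, rfl⟩)

theorem addMonoidHom_ext {φ ψ : BalancedTensor A M N →+ T}
    (h : ∀ m n, φ (tmul A m n) = ψ (tmul A m n)) : φ = ψ := by
  refine AddMonoidHom.ext fun x => ?_
  induction x using induction_on with
  | zero => simp only [map_zero]
  | tmul m n => exact h m n
  | add x y hx hy => simp only [map_add, hx, hy]

theorem balancedMapLeft_balancedMapRight (f : M →ₗ[Aᵐᵒᵖ] M') (g : N →ₗ[A] N')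
    (x : BalancedTensor A M N) :
    balancedMapLeft f (balancedMapRight g x) = balancedMapRight g (balancedMapLeft f x) :=
  DFunLike.congr_fun (addMonoidHom_ext (φ := (balancedMapLeft f).comp (balancedMapRight g))
    (ψ := (balancedMapRight g).comp (balancedMapLeft f)) fun _ _ => rfl) x

theorem balancedMapLeft_id :
    balancedMapLeft (N := N) (LinearMap.id : M →ₗ[Aᵐᵒᵖ] M) = AddMonoidHom.id _ :=
  addMonoidHom_ext fun _ _ => rfl

theorem balancedMapLeft_comp (f : M →ₗ[Aᵐᵒᵖ] M') (f' : M' →ₗ[Aᵐᵒᵖ] M'') :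
    balancedMapLeft (N := N) (f' ∘ₗ f) = (balancedMapLeft f').comp (balancedMapLeft f) :=
  addMonoidHom_ext fun _ _ => rfl

noncomputable def lift (φ : M →+ N →+ T) (hφ : ∀ (a : A) m n, φ (op a • m) n = φ m (a • n)) :
    BalancedTensor A M N →+ T :=
  QuotientAddGroup.lift _ (TensorProduct.liftAddHom φ fun k m n => by
      rw [map_zsmul, map_zsmul, AddMonoidHom.zsmul_apply]) <| by
    rw [balancedRel, AddSubgroup.closure_le]
    rintro _ ⟨a, m, n, rfl⟩
    simp [hφ]

end BalancedTensor

section ExtendScalars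

open BalancedTensor

variable {A B : Type} [Ring A] [Ring B] [Module A B]
  (hB : ∀ (a : A) (x y : B), a • (x * y) = (a • x) * y)

noncomputable def extendScalarsObj (N : ModuleCat.{0} Aᵐᵒᵖ) : ModuleCat.{0} Bᵐᵒᵖ :=
  @ModuleCat.of Bᵐᵒᵖ _ (BalancedTensor A N B) _ (balancedTensorModule N hB)

/-- `BalancedTensor.induction_on`, restated so that `0` and `+` are those of the bundled module:
they agree with the ones of `BalancedTensor A N B` only after unfolding `extendScalarsObj`. -/
@[elab_as_elim]
theorem extendScalarsObj_induction_on {N : ModuleCat.{0} Aᵐᵒᵖ}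
    {motive : extendScalarsObj hB N → Prop} (x : extendScalarsObj hB N) (zero : motive 0)
    (tmul : ∀ m b, motive (tmul A m b)) (add : ∀ x y, motive x → motive y → motive (x + y)) :
    motive x :=
  induction_on x zero tmul add

theorem extendScalarsObj_linearMap_ext {N : ModuleCat.{0} Aᵐᵒᵖ} {T : Type} [AddCommGroup T]
    [Module Bᵐᵒᵖ T] {φ ψ : extendScalarsObj hB N →ₗ[Bᵐᵒᵖ] T}
    (h : ∀ m b, φ (tmul A m b) = ψ (tmul A m b)) : φ = ψ :=
  LinearMap.ext fun x => by
    induction x using extendScalarsObj_induction_on with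
    | zero => simp only [map_zero]
    | tmul m b => exact h m b
    | add x y hx hy => simp only [map_add, hx, hy]

noncomputable def extendScalars : ModuleCat.{0} Aᵐᵒᵖ ⥤ ModuleCat.{0} Bᵐᵒᵖ where
  obj := extendScalarsObj hB
  map {N N'} f := ModuleCat.ofHom (X := extendScalarsObj hB N) (Y := extendScalarsObj hB N')
    { toFun := balancedMapLeft f.hom
      map_add' := map_add _
      map_smul' _ x := balancedMapLeft_balancedMapRight f.hom _ x }
  map_id _ := ModuleCat.hom_ext <| LinearMap.ext fun x => congr($balancedMapLeft_id x)
  map_comp f g := ModuleCat.hom_ext <| LinearMap.ext fun x =>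
    congr($(balancedMapLeft_comp f.hom g.hom) x)

variable (α : A →+* B) (hα : ∀ (a : A) (x : B), a • x = α a * x)

noncomputable def extendScalarsUnit (N : ModuleCat.{0} Aᵐᵒᵖ) :
    N →ₛₗ[RingHom.op α] extendScalarsObj hB N where
  toFun m := tmul A m 1
  map_add' m m' := add_tmul m m' 1
  map_smul' a m := by
    change tmul A (op a.unop • m) 1 = tmul A m (1 * α a.unop)
    rw [op_smul_tmul, hα, mul_one, one_mul]

noncomputable def extendScalarsLift {N : ModuleCat.{0} Aᵐᵒᵖ} {T : Type} [AddCommGroup T]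
    [Module Bᵐᵒᵖ T] (ψ : N →ₛₗ[RingHom.op α] T) : extendScalarsObj hB N →ₗ[Bᵐᵒᵖ] T :=
  let F : BalancedTensor A N B →+ T :=
    lift (AddMonoidHom.mk' (fun m => AddMonoidHom.mk' (fun b => op b • ψ m)
        fun b b' => by rw [MulOpposite.op_add, add_smul])
        fun m m' => AddMonoidHom.ext fun b => by simp [smul_add])
      fun a m b => by simp [hα, ← mul_smul]
  { toFun := F
    map_add' := map_add F
    -- `b • x` is `balancedMapRight (rmulLin hB b.unop) x` by definition.
    map_smul' b := DFunLike.congr_fun <| addMonoidHom_ext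
      (φ := F.comp (balancedMapRight (rmulLin hB b.unop)))
      (ψ := (DistribSMul.toAddMonoidHom T b).comp F) fun m c => by
        change op (c * b.unop) • ψ m = b • op c • ψ m
        rw [op_mul, op_unop, mul_smul] }

noncomputable def extendScalarsLinearMapEquiv (N : ModuleCat.{0} Aᵐᵒᵖ) (T : Type)
    [AddCommGroup T] [Module Bᵐᵒᵖ T] :
    (extendScalarsObj hB N →ₗ[Bᵐᵒᵖ] T) ≃ (N →ₛₗ[RingHom.op α] T) where
  toFun φ := φ.comp (extendScalarsUnit hB α hα N)
  invFun := extendScalarsLift hB α hα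
  left_inv φ := extendScalarsObj_linearMap_ext hB fun m b =>
    (φ.map_smul (op b) (tmul A m 1)).symm.trans (congrArg φ (congrArg (tmul A m) (one_mul b)))
  right_inv ψ := LinearMap.ext fun m => one_smul Bᵐᵒᵖ (ψ m)

noncomputable def extendScalarsAdj :
    extendScalars hB ⊣ ModuleCat.restrictScalars (RingHom.op α) :=
  Adjunction.mkOfHomEquiv
    { homEquiv N T := ModuleCat.homEquiv.trans <| (extendScalarsLinearMapEquiv hB α hα N T).trans
        (ModuleCat.semilinearMapAddEquiv (RingHom.op α) N T).toEquiv
      homEquiv_naturality_left_symm _ _ :=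
        ModuleCat.hom_ext <| extendScalarsObj_linearMap_ext hB fun _ _ => rfl
      homEquiv_naturality_right _ _ := rfl }

include hα in
theorem extendScalarsObj_finite (N : ModuleCat.{0} Aᵐᵒᵖ) [Module.Finite Aᵐᵒᵖ N] :
    Module.Finite Bᵐᵒᵖ (extendScalarsObj hB N) := by
  obtain ⟨S, hS⟩ := Module.Finite.fg_top (R := Aᵐᵒᵖ) (M := N)
  set η := extendScalarsUnit hB α hα N
  set W := Submodule.span Bᵐᵒᵖ (η '' S)
  have hη : ∀ m, η m ∈ W := fun m => by
    have : Submodule.span Aᵐᵒᵖ (S : Set N) ≤ W.comap η :=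
      Submodule.span_le.2 fun m hm => Submodule.subset_span (Set.mem_image_of_mem η hm)
    exact this (hS ▸ Submodule.mem_top)
  refine Module.finite_def.2 (Submodule.fg_def.2 ⟨η '' S, S.finite_toSet.image η, ?_⟩)
  refine Submodule.eq_top_iff'.2 fun x => ?_
  induction x using extendScalarsObj_induction_on with
  | zero => exact W.zero_mem
  | tmul m b =>
    have : (op b • η m : extendScalarsObj hB N) = tmul A m b := congrArg (tmul A m) (one_mul b)
    exact this ▸ W.smul_mem (op b) (hη m)
  | add x y hx hy => exact W.add_mem hx hy

include hα in
theorem extendScalarsObj_projective (N : ModuleCat.{0} Aᵐᵒᵖ) [Module.Projective Aᵐᵒᵖ N] :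
    Module.Projective Bᵐᵒᵖ (extendScalarsObj hB N) :=
  haveI : Projective (extendScalarsObj hB N) :=
    (extendScalarsAdj hB α hα).map_projective N inferInstance
  inferInstance

end ExtendScalars

section Regularity

variable {R S : Type} [Ring R] [Ring S]

theorem IsExactClass.comap {P : ModuleCat.{0} S → Prop} (hP : IsExactClass P)
    (F : ModuleCat.{0} R ⥤ ModuleCat.{0} S)
    (hF : ∀ (X Y Z : ModuleCat.{0} R) (f : X ⟶ Y) (g : Y ⟶ Z),
      Function.Injective f → Function.Surjective g → Function.Exact f g →
        Function.Injective (F.map f) ∧ Function.Surjective (F.map g) ∧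
          Function.Exact (F.map f) (F.map g)) :
    IsExactClass fun N => P (F.obj N) := fun X Y Z f g hf hg hfg =>
  let ⟨hf', hg', hfg'⟩ := hF X Y Z f g hf hg hfg
  hP _ _ _ (F.map f) (F.map g) hf' hg' hfg'

theorem IsCocompleteClass.comap {P : ModuleCat.{0} S → Prop} (hP : IsCocompleteClass P)
    (F : ModuleCat.{0} R ⥤ ModuleCat.{0} S) [Limits.PreservesFilteredColimitsOfSize.{0, 0} F] :
    IsCocompleteClass fun N => P (F.obj N) := fun J _ _ D _ hc hD =>
  hP J (D ⋙ F) _ (Limits.isColimitOfPreserves F hc) hD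

theorem IsRegularModule.map {M : Type} [AddCommGroup M] [Module R M] (hM : IsRegularModule R M)
    (F : ModuleCat.{0} R ⥤ ModuleCat.{0} S)
    (hF : ∀ (X Y Z : ModuleCat.{0} R) (f : X ⟶ Y) (g : Y ⟶ Z),
      Function.Injective f → Function.Surjective g → Function.Exact f g →
        Function.Injective (F.map f) ∧ Function.Surjective (F.map g) ∧
          Function.Exact (F.map f) (F.map g))
    [Limits.PreservesFilteredColimitsOfSize.{0, 0} F] (hFP : ∀ N, FGProj N → FGProj (F.obj N)) :
    IsRegularModule S (F.obj (ModuleCat.of R M)) := fun _ hPex hPcc hPfg =>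
  hM _ (hPex.comap F hF) (hPcc.comap F) fun N hN => hPfg _ (hFP N hN)

end Regularity

/-- Let `α : A → B` be a ring homomorphism such that `B`, regarded as a left
`A`-module via `α`, is flat, and let `M` be an `A`-regular right `A`-module.  Then the right
`B`-module `M ⊗_A B` is `B`-regular. -/
theorem statement4 (A B : Type) [Ring A] [Ring B] (α : A →+* B)
    [Module A B] (hα : ∀ (a : A) (x : B), a • x = α a * x)
    (hBflat : LeftModuleFlat A B)
    (M : Type) [AddCommGroup M] [Module Aᵐᵒᵖ M] (hM : IsRegularModule Aᵐᵒᵖ M) :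
    @IsRegularModule Bᵐᵒᵖ _ (BalancedTensor A M B) _
      (balancedTensorModule M (fun a x y => by rw [hα, hα, mul_assoc])) := by
  have hB : ∀ (a : A) (x y : B), a • (x * y) = (a • x) * y := fun a x y => by
    rw [hα, hα, mul_assoc]
  have := (extendScalarsAdj hB α hα).leftAdjoint_preservesColimits
  refine hM.map (extendScalars hB) (fun X Y Z f g => hBflat X Y Z f.hom g.hom) fun N hN => ?_
  obtain ⟨_, _⟩ := hN
  exact ⟨extendScalarsObj_finite hB α hα N, extendScalarsObj_projective hB α hα N⟩
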